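/- Let w be a pseudometric and d,s_i,t_i,s_j,t_j points, with u_{ij}, u_{ji} as in the car-sharing problem. Then min{2(w(d,s_i)+w(s_i,t_i))+w(t_i,d)+w(d,s_j)+w(s_j,t_j), 2(w(d,s_j)+w(s_j,t_j))+w(t_j,d)+w(d,s_i)+w(s_i,t_i)} ≤ 4·min{w(d,s_i)+u_{ij}, w(d,s_j)+u_{ji}}. -/

import Mathlib

/-!
Write `c = dist d si + u si ti sj tj` for the cost of the best route from `d` serving request `i`
first. Every route in `u` travels from `si` to `ti`, and from `si` via `sj` to `tj`, so by the
triangle inequality `c` bounds each of `dist d si + dist si ti`, `dist d ti` and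
`dist d sj + dist sj tj`. The first alternative on the left is a sum of these with weights
`2, 1, 1`, hence at most `4 c`; symmetrically for `j`.
-/

noncomputable def u {α : Type*} [PseudoMetricSpace α] (si ti sj tj : α) : ℝ :=
  min (min (dist si sj + dist sj ti + dist ti tj) (dist si sj + dist sj tj + dist tj ti))
    (dist si ti + dist ti sj + dist sj tj)

section

variable {α : Type*} [PseudoMetricSpace α]

lemma dist_le_u (si ti sj tj : α) : dist si ti ≤ u si ti sj tj := by
  simp only [u, le_min_iff]
  refine ⟨⟨?_, ?_⟩, ?_⟩
  · linarith [dist_triangle si sj ti, dist_nonneg (x := ti) (y := tj)]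
  · linarith [dist_triangle si sj ti, dist_triangle sj tj ti]
  · linarith [dist_nonneg (x := ti) (y := sj), dist_nonneg (x := sj) (y := tj)]

lemma dist_add_dist_le_u (si ti sj tj : α) :
    dist si sj + dist sj tj ≤ u si ti sj tj := by
  simp only [u, le_min_iff]
  refine ⟨⟨?_, ?_⟩, ?_⟩
  · linarith [dist_triangle sj ti tj]
  · linarith [dist_nonneg (x := tj) (y := ti)]
  · linarith [dist_triangle si ti sj]

lemma sequential_service_le_four_mul (d si ti sj tj : α) :
    2 * (dist d si + dist si ti) + (dist ti d + dist d sj + dist sj tj)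
      ≤ 4 * (dist d si + u si ti sj tj) := by
  have h_ride_i := dist_le_u si ti sj tj
  have h_ride_j := dist_add_dist_le_u si ti sj tj
  have h_return : dist ti d ≤ dist d si + dist si ti := by
    rw [dist_comm ti d]; exact dist_triangle d si ti
  have h_reach : dist d sj ≤ dist d si + dist si sj := dist_triangle d si sj
  linarith

end

theorem ta_two_four_approx_sum {α : Type*} [PseudoMetricSpace α]
    (d si ti sj tj : α) :
    min (2 * (dist d si + dist si ti) + (dist ti d + dist d sj + dist sj tj))
        (2 * (dist d sj + dist sj tj) + (dist tj d + dist d si + dist si ti))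
      ≤ 4 * min (dist d si + u si ti sj tj) (dist d sj + u sj tj si ti) := by
  rw [mul_min_of_nonneg _ _ (by norm_num : (0 : ℝ) ≤ 4)]
  exact min_le_min (sequential_service_le_four_mul d si ti sj tj)
    (sequential_service_le_four_mul d sj tj si ti)
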